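/- arXiv:math-ph/0601049 — 2 statements merged into one kernel-verified Lean document; each statement's English description precedes it below -/
import Mathlib

section
/- Let T be the integral operator on L²(ℝ₊) with kernel 𝒯(x,y) = e^{-|x-y|}. For every ψ ∈ L²(ℝ₊), the image function (Tψ)(x) = ∫₀^∞ e^{-|x-y|} ψ(y) dy is twice differentiable and satisfies the differential equation (Tψ)'' = Tψ − 2ψ. -/
/-!
Extend `ψ` by zero to `φ` on `ℝ`. Splitting the kernel at `y = x` gives
`Tφ x = e^{-x} ∫_{y ≤ x} e^y φ y + e^x ∫_{y > x} e^{-y} φ y`, where both weighted integrals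
converge by Cauchy–Schwarz since `φ ∈ L²`. By the Lebesgue differentiation theorem the two
integrals have derivatives `e^x φ x` and `-e^{-x} φ x` almost everywhere; in the product rule the
`φ`-terms cancel in the first derivative and add up to `-2φ` in the second.
-/

open MeasureTheory Set
open Real

section SetIntegralDeriv

variable {f : ℝ → ℝ}

theorem ae_hasDerivAt_setIntegral_Iic (hf : ∀ a, IntegrableOn f (Iic a)) :
    ∀ᵐ x, HasDerivAt (fun x => ∫ t in Iic x, f t) (f x) x := by
  have hloc : LocallyIntegrable f := locallyIntegrable_iff.2 fun k hk =>
    let ⟨a, ha⟩ := hk.bddAbove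
    (hf a).mono_set fun _ hx => ha hx
  filter_upwards [LocallyIntegrable.ae_hasDerivAt_integral hloc] with x hx
  have hsplit :
      (fun x => ∫ t in Iic x, f t) = fun x => (∫ t in Iic 0, f t) + ∫ t in 0..x, f t := by
    funext y
    rw [← intervalIntegral.integral_Iic_sub_Iic (hf 0) (hf y), add_sub_cancel]
  rw [hsplit]
  exact (hx 0).const_add _

theorem ae_hasDerivAt_setIntegral_Ioi (hf : ∀ a, IntegrableOn f (Ioi a)) :
    ∀ᵐ x, HasDerivAt (fun x => ∫ t in Ioi x, f t) (-f x) x := by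
  have hloc : LocallyIntegrable f := locallyIntegrable_iff.2 fun k hk =>
    let ⟨a, ha⟩ := hk.bddBelow
    (hf (a - 1)).mono_set fun _ hx => (sub_one_lt a).trans_le (ha hx)
  filter_upwards [LocallyIntegrable.ae_hasDerivAt_integral hloc] with x hx
  have hsplit :
      (fun x => ∫ t in Ioi x, f t) = fun x => (∫ t in Ioi 0, f t) - ∫ t in 0..x, f t := by
    funext y
    rw [← intervalIntegral.integral_Ioi_sub_Ioi' (hf 0) (hf y), sub_sub_cancel]
  rw [hsplit]
  exact (hx 0).const_sub _

end SetIntegralDeriv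

theorem integral_exp_neg_abs_sub_mul {φ : ℝ → ℝ} {x : ℝ}
    (hl : IntegrableOn (fun y => exp y * φ y) (Iic x))
    (hr : IntegrableOn (fun y => exp (-y) * φ y) (Ioi x)) :
    ∫ y, exp (-|x - y|) * φ y =
      exp (-x) * (∫ y in Iic x, exp y * φ y) + exp x * ∫ y in Ioi x, exp (-y) * φ y := by
  have hIic : EqOn (fun y => exp (-|x - y|) * φ y) (fun y => exp (-x) * (exp y * φ y)) (Iic x) :=
    fun y (hy : y ≤ x) => by
      dsimp only
      rw [abs_of_nonneg (sub_nonneg.2 hy), neg_sub, sub_eq_add_neg, exp_add]; ring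
  have hIoi : EqOn (fun y => exp (-|x - y|) * φ y) (fun y => exp x * (exp (-y) * φ y)) (Ioi x) :=
    fun y (hy : x < y) => by
      dsimp only
      rw [abs_of_neg (sub_neg.2 hy), neg_neg, sub_eq_add_neg, exp_add]; ring
  rw [← intervalIntegral.integral_Iic_add_Ioi
      (IntegrableOn.congr_fun (hl.const_mul _) hIic.symm measurableSet_Iic)
      (IntegrableOn.congr_fun (hr.const_mul _) hIoi.symm measurableSet_Ioi),
    setIntegral_congr_fun measurableSet_Iic hIic, setIntegral_congr_fun measurableSet_Ioi hIoi,
    integral_const_mul, integral_const_mul]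

theorem exists_hasDerivAt_integral_exp_neg_abs_sub {φ : ℝ → ℝ}
    (hl : ∀ a, IntegrableOn (fun y => exp y * φ y) (Iic a))
    (hr : ∀ a, IntegrableOn (fun y => exp (-y) * φ y) (Ioi a)) :
    ∃ F' : ℝ → ℝ, (∀ᵐ x, HasDerivAt (fun x => ∫ y, exp (-|x - y|) * φ y) (F' x) x) ∧
      ∀ᵐ x, HasDerivAt F' ((∫ y, exp (-|x - y|) * φ y) - 2 * φ x) x := by
  set U := fun x => ∫ y in Iic x, exp y * φ y
  set V := fun x => ∫ y in Ioi x, exp (-y) * φ y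
  have hT (x : ℝ) : ∫ y, exp (-|x - y|) * φ y = exp (-x) * U x + exp x * V x :=
    integral_exp_neg_abs_sub_mul (hl x) (hr x)
  have hexp_neg (x : ℝ) : HasDerivAt (fun x => exp (-x)) (-exp (-x)) x := by
    simpa using (hasDerivAt_neg x).exp
  have hinv (x : ℝ) : exp x * exp (-x) = 1 := by rw [← exp_add, add_neg_cancel, exp_zero]
  have hUV := (ae_hasDerivAt_setIntegral_Iic hl).and (ae_hasDerivAt_setIntegral_Ioi hr)
  refine ⟨fun x => exp x * V x - exp (-x) * U x, ?_, ?_⟩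
  · rw [funext hT]
    filter_upwards [hUV] with x ⟨hU, hV⟩
    exact ((hexp_neg x).mul hU |>.add <| (hasDerivAt_exp x).mul hV).congr_deriv
      (by linear_combination (-φ x) * hinv x + φ x * hinv x)
  · filter_upwards [hUV] with x ⟨hU, hV⟩
    exact ((hasDerivAt_exp x).mul hV |>.sub <| (hexp_neg x).mul hU).congr_deriv
      (by rw [hT]; linear_combination (-2 * φ x) * hinv x)

theorem memLp_two_exp_Iic (c : ℝ) : MemLp exp 2 (volume.restrict (Iic c)) := by
  rw [memLp_two_iff_integrable_sq continuous_exp.aestronglyMeasurable]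
  simpa [IntegrableOn, ← exp_nat_mul] using integrableOn_exp_mul_Iic two_pos c

theorem memLp_two_exp_neg_Ioi (c : ℝ) :
    MemLp (fun x => exp (-x)) 2 (volume.restrict (Ioi c)) := by
  rw [memLp_two_iff_integrable_sq (continuous_neg.rexp).aestronglyMeasurable]
  simpa [IntegrableOn, ← exp_nat_mul] using integrableOn_exp_mul_Ioi (neg_neg_of_pos two_pos) c

/-- The integral operator `T` on `L²(ℝ₊)` with kernel `e^{-|x-y|}`: for every
`ψ ∈ L²(ℝ₊)`, the image function `(Tψ)(x) = ∫₀^∞ e^{-|x-y|} ψ(y) dy` is twice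
differentiable (a.e.) and satisfies `(Tψ)'' = Tψ − 2ψ`. -/
theorem stmt_0 (ψ : ℝ → ℝ)
    (hψ : MemLp ψ 2 (volume.restrict (Ioi (0 : ℝ))))
    (F : ℝ → ℝ)
    (hF : ∀ x : ℝ, F x = ∫ y in Ioi (0 : ℝ), Real.exp (-|x - y|) * ψ y) :
    ∃ F' F'' : ℝ → ℝ,
      (∀ᵐ x ∂(volume.restrict (Ioi (0 : ℝ))), HasDerivAt F (F' x) x) ∧
      (∀ᵐ x ∂(volume.restrict (Ioi (0 : ℝ))), HasDerivAt F' (F'' x) x) ∧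
      (∀ᵐ x ∂(volume.restrict (Ioi (0 : ℝ))), F'' x = F x - 2 * ψ x) := by
  set φ := (Ioi (0 : ℝ)).indicator ψ
  have hφ : MemLp φ 2 := (memLp_indicator_iff_restrict measurableSet_Ioi).2 hψ
  have hFφ : F = fun x => ∫ y, exp (-|x - y|) * φ y := funext fun x => by
    rw [hF, ← integral_indicator measurableSet_Ioi]
    simp only [φ, indicator_mul_right]
  obtain ⟨F', hF', hF''⟩ := exists_hasDerivAt_integral_exp_neg_abs_sub
    (fun a => (memLp_two_exp_Iic a).integrable_mul (hφ.restrict _))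
    (fun a => (memLp_two_exp_neg_Ioi a).integrable_mul (hφ.restrict _))
  refine ⟨F', fun x => F x - 2 * ψ x, hFφ ▸ ae_restrict_of_ae hF', ?_, ae_of_all _ fun _ => rfl⟩
  filter_upwards [ae_restrict_mem measurableSet_Ioi, ae_restrict_of_ae hF''] with x hx h
  rwa [hFφ, ← indicator_of_mem hx ψ]
end

section
/- For ω > 0 let b = arccot(ω) and ψ_ω(x) = cos(ωx − b). Then for all x ≥ 0 one has ∫₀^∞ e^{-|x-y|} ψ_ω(y) dy = (2/(1+ω²)) ψ_ω(x). That is, ψ_ω is a bounded generalized eigenfunction of the kernel e^{-|x-y|} with eigenvalue 2/(1+ω²). -/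
/-!
Both halves of the kernel integral are elementary: `y ↦ e^{a y}(a cos(ωy - b) + ω sin(ωy - b))/(a² + ω²)`
is a primitive of `e^{a y} cos(ωy - b)`. Splitting `∫₀^∞ e^{-|x-y|} ψ(y) dy` at `y = x` and using this
with `a = 1` on `[0, x]` and `a = -1` on `[x, ∞)` gives `2ψ(x)/(1+ω²)` plus a boundary term from `y = 0`
proportional to `e^{-x}(cos b - ω sin b)`. The phase `b = arccot ω` is exactly the one making
`cot b = ω`, so the boundary term vanishes.
-/

open MeasureTheory Set Filter Real

noncomputable def expCosPrimitive (a ω b y : ℝ) : ℝ :=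
  exp (a * y) * (a * cos (ω * y - b) + ω * sin (ω * y - b)) / (a ^ 2 + ω ^ 2)

section ExpCos

variable (a ω b : ℝ)

theorem continuous_expCosPrimitive : Continuous (expCosPrimitive a ω b) := by
  unfold expCosPrimitive
  fun_prop

theorem hasDerivAt_expCosPrimitive (h : a ^ 2 + ω ^ 2 ≠ 0) (y : ℝ) :
    HasDerivAt (expCosPrimitive a ω b) (exp (a * y) * cos (ω * y - b)) y := by
  have hlin : HasDerivAt (fun y => ω * y - b) ω y := by
    simpa using ((hasDerivAt_id y).const_mul ω).sub_const b
  have hexp : HasDerivAt (fun y => exp (a * y)) (exp (a * y) * a) y := by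
    simpa using ((hasDerivAt_id y).const_mul a).exp
  refine ((hexp.mul ((hlin.cos.const_mul a).add (hlin.sin.const_mul ω))).div_const
    (a ^ 2 + ω ^ 2)).congr_deriv ?_
  simp only [Pi.add_apply]
  field_simp
  ring

theorem integral_exp_mul_cos (h : a ^ 2 + ω ^ 2 ≠ 0) (x₀ x₁ : ℝ) :
    ∫ y in x₀..x₁, exp (a * y) * cos (ω * y - b) =
      expCosPrimitive a ω b x₁ - expCosPrimitive a ω b x₀ :=
  intervalIntegral.integral_eq_sub_of_hasDerivAt
    (fun y _ => hasDerivAt_expCosPrimitive a ω b h y)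
    ((by fun_prop : Continuous fun y => exp (a * y) * cos (ω * y - b)).intervalIntegrable _ _)

variable {a}

theorem integrableOn_Ioi_exp_mul_cos (ha : a < 0) (x : ℝ) :
    IntegrableOn (fun y => exp (a * y) * cos (ω * y - b)) (Ioi x) := by
  refine Integrable.mono' (by simpa using (exp_neg_integrableOn_Ioi x (neg_pos.2 ha)).integrable)
    (by fun_prop : Continuous _).aestronglyMeasurable.restrict (Eventually.of_forall fun y => ?_)
  rw [norm_mul, norm_of_nonneg (exp_pos _).le]
  exact mul_le_of_le_one_right (exp_pos _).le (abs_cos_le_one _)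

theorem tendsto_expCosPrimitive_atTop (ha : a < 0) :
    Tendsto (expCosPrimitive a ω b) atTop (nhds 0) := by
  have hexp : Tendsto (fun y => exp (a * y)) atTop (nhds 0) :=
    tendsto_exp_atBot.comp (tendsto_id.const_mul_atTop_of_neg ha)
  refine squeeze_zero_norm (fun y => ?_)
    (by simpa using (hexp.mul_const (|a| + |ω|)).div_const (a ^ 2 + ω ^ 2))
  have hbound : |a * cos (ω * y - b) + ω * sin (ω * y - b)| ≤ |a| + |ω| := by
    refine (abs_add_le _ _).trans ?_
    rw [abs_mul, abs_mul]
    exact add_le_add (mul_le_of_le_one_right (abs_nonneg a) (abs_cos_le_one _))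
      (mul_le_of_le_one_right (abs_nonneg ω) (abs_sin_le_one _))
  rw [expCosPrimitive, norm_div, norm_mul, norm_of_nonneg (exp_pos _).le,
    norm_of_nonneg (by positivity : 0 ≤ a ^ 2 + ω ^ 2)]
  gcongr
  exact hbound

theorem integral_Ioi_exp_mul_cos (ha : a < 0) (x : ℝ) :
    ∫ y in Ioi x, exp (a * y) * cos (ω * y - b) = -expCosPrimitive a ω b x := by
  have h : a ^ 2 + ω ^ 2 ≠ 0 := by nlinarith [sq_nonneg ω]
  simpa using integral_Ioi_of_hasDerivAt_of_tendsto
    (continuous_expCosPrimitive a ω b).continuousWithinAt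
    (fun y _ => hasDerivAt_expCosPrimitive a ω b h y) (integrableOn_Ioi_exp_mul_cos ω b ha x)
    (tendsto_expCosPrimitive_atTop ω b ha)

end ExpCos

theorem integral_Ioi_zero_exp_neg_abs_sub_mul_cos (ω b : ℝ) {x : ℝ} (hx : 0 ≤ x) :
    ∫ y in Ioi 0, exp (-|x - y|) * cos (ω * y - b) =
      (2 * cos (ω * x - b) - exp (-x) * (cos b - ω * sin b)) / (1 + ω ^ 2) := by
  have hleft : EqOn (fun y => exp (-|x - y|) * cos (ω * y - b))
      (fun y => exp (-x) * (exp (1 * y) * cos (ω * y - b))) (Ioc 0 x) := fun y hy => by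
    dsimp only
    rw [abs_of_nonneg (sub_nonneg.2 hy.2), ← mul_assoc, ← exp_add]
    ring_nf
  have hright : EqOn (fun y => exp (-|x - y|) * cos (ω * y - b))
      (fun y => exp x * (exp (-1 * y) * cos (ω * y - b))) (Ioi x) := fun y hy => by
    dsimp only
    rw [abs_of_neg (sub_neg.2 hy), ← mul_assoc, ← exp_add]
    ring_nf
  have hintegrable : IntegrableOn (fun y => exp (-|x - y|) * cos (ω * y - b)) (Ioi x) :=
    IntegrableOn.congr_fun
      ((integrableOn_Ioi_exp_mul_cos ω b neg_one_lt_zero x).const_mul (exp x))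
      hright.symm measurableSet_Ioi
  rw [← Ioc_union_Ioi_eq_Ioi hx, setIntegral_union (Ioc_disjoint_Ioi le_rfl) measurableSet_Ioi
    (by fun_prop : Continuous fun y => exp (-|x - y|) * cos (ω * y - b)).integrableOn_Ioc
    hintegrable, setIntegral_congr_fun measurableSet_Ioc hleft,
    setIntegral_congr_fun measurableSet_Ioi hright, integral_const_mul, integral_const_mul,
    ← intervalIntegral.integral_of_le hx, integral_exp_mul_cos 1 ω b (by positivity),
    integral_Ioi_exp_mul_cos ω b neg_one_lt_zero]
  simp only [expCosPrimitive, one_mul, neg_one_mul, exp_neg, mul_zero, zero_sub, exp_zero,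
    cos_neg, sin_neg]
  field_simp
  ring

theorem sin_arctan_eq_mul_cos_arctan (x : ℝ) : sin (arctan x) = x * cos (arctan x) := by
  rw [sin_arctan, cos_arctan, mul_one_div]

theorem stmt_1_general (ω : ℝ) :
    let b : ℝ := Real.pi / 2 - Real.arctan ω
    let ψ : ℝ → ℝ := fun x => Real.cos (ω * x - b)
    (∀ x : ℝ, |ψ x| ≤ 1) ∧
    (∀ x : ℝ, 0 ≤ x →
      ∫ y in Ioi (0 : ℝ), Real.exp (-|x - y|) * ψ y
        = (2 / (1 + ω ^ 2)) * ψ x) := by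
  intro b ψ
  refine ⟨fun x => abs_cos_le_one _, fun x hx => ?_⟩
  rw [integral_Ioi_zero_exp_neg_abs_sub_mul_cos ω b hx, cos_pi_div_two_sub, sin_pi_div_two_sub,
    sin_arctan_eq_mul_cos_arctan]
  ring

/-- For `ω > 0` let `b = arccot ω = π/2 − arctan ω` and `ψ_ω(x) = cos(ωx − b)`.
Then `ψ_ω` is bounded and for all `x ≥ 0`,
`∫₀^∞ e^{-|x-y|} ψ_ω(y) dy = (2/(1+ω²)) ψ_ω(x)`. -/
theorem stmt_1 (ω : ℝ) (hω : 0 < ω) :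
    let b : ℝ := Real.pi / 2 - Real.arctan ω
    let ψ : ℝ → ℝ := fun x => Real.cos (ω * x - b)
    (∀ x : ℝ, |ψ x| ≤ 1) ∧
    (∀ x : ℝ, 0 ≤ x →
      ∫ y in Ioi (0 : ℝ), Real.exp (-|x - y|) * ψ y
        = (2 / (1 + ω ^ 2)) * ψ x) :=
  stmt_1_general ω
end
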